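/- In the Bertrand duopoly with operational cost, if α > c + 2√(O_c), then the set E := ([p_b, p_m*] ∪ {n_o})^2 is an equilibrium cycle, where p_m* := (α + c)/2 and p_b := p_m* − √((α − c)²/4 − O_c). -/

import Mathlib

open Set Function

variable {ι : Type*} [Fintype ι] [DecidableEq ι] {α : ι → Type*}

/-- Stability condition (1) of an equilibrium cycle: for every player `i` and every
opponent profile lying in `E`, some action in `E i` strictly outperforms every
action in `A i \ E i`. -/
def Stability (A E : ∀ i, Set (α i)) (U : ι → (∀ j, α j) → ℝ) : Prop :=
  ∀ (i : ι) (a : ∀ j, α j), (∀ j, j ≠ i → a j ∈ E j) →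
    ∃ b ∈ E i, ∀ c ∈ A i \ E i,
      U i (update a i b) > U i (update a i c)

/-- Unrest condition (2) of an equilibrium cycle: at every profile in `E`, some player
has a strictly improving deviation inside `E i` that also strictly outperforms every
action in `A i \ E i`. -/
def Unrest (A E : ∀ i, Set (α i)) (U : ι → (∀ j, α j) → ℝ) : Prop :=
  ∀ a : ∀ j, α j, (∀ j, a j ∈ E j) →
    ∃ i, ∃ b ∈ E i, U i (update a i b) > U i a ∧
      ∀ c ∈ A i \ E i, U i (update a i b) > U i (update a i c)

/-- Equilibrium cycle: a nonempty closed Cartesian product set satisfying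
stability, unrest, and minimality (no nonempty closed Cartesian product strict
subset satisfies stability and unrest). -/
def IsEquilibriumCycle [∀ i, MetricSpace (α i)] (A E : ∀ i, Set (α i))
    (U : ι → (∀ j, α j) → ℝ) : Prop :=
  (∀ i, (E i).Nonempty) ∧ (∀ i, E i ⊆ A i) ∧ (∀ i, IsClosed (E i)) ∧
  Stability A E U ∧ Unrest A E U ∧
  ∀ F : ∀ i, Set (α i), (∀ i, (F i).Nonempty) → (∀ i, IsClosed (F i)) →
    Set.pi Set.univ F ⊂ Set.pi Set.univ E → ¬(Stability A F U ∧ Unrest A F U)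

/-- Pure Nash equilibrium of the game with action sets `A` and utilities `U`. -/
def IsPureNash (A : ∀ i, Set (α i)) (U : ι → (∀ j, α j) → ℝ)
    (a : ∀ j, α j) : Prop :=
  (∀ j, a j ∈ A j) ∧ ∀ i, ∀ b ∈ A i, U i a ≥ U i (update a i b)

/-- The opponent of a player in a two-player game. -/
def opp : Fin 2 → Fin 2 := fun i => if i = 0 then 1 else 0

/-- Linear demand: `D p = α - p` for `0 ≤ p ≤ α`, and `0` otherwise. -/
noncomputable def demand (al p : ℝ) : ℝ := if 0 ≤ p ∧ p ≤ al then al - p else 0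

/-- Payoff in the Bertrand duopoly with operational cost: own price `p`, opponent
price `q`; the opt-out action `n_o` is modeled by `-1`. -/
noncomputable def bertPay (al c Oc p q : ℝ) : ℝ :=
  if p = -1 then 0
  else if p = q then (1 / 2) * (p - c) * demand al p - Oc
  else if q = -1 ∨ p < q then (p - c) * demand al p - Oc
  else -Oc

/-- Utility functions of the Bertrand duopoly. -/
noncomputable def bertU (al c Oc : ℝ) : Fin 2 → (Fin 2 → ℝ) → ℝ :=
  fun i a => bertPay al c Oc (a i) (a (opp i))


/-! ### Auxiliary material for the proof -/

section BertrandAux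

open Set Function

private lemma opp_ne' : ∀ i : Fin 2, opp i ≠ i := by decide

private lemma opp_opp' : ∀ i : Fin 2, opp (opp i) = i := by decide

private lemma eq_opp_of_ne : ∀ {i j : Fin 2}, j ≠ i → j = opp i := by decide

private lemma fin2_eq_or : ∀ i j : Fin 2, j = i ∨ j = opp i := by decide

variable {al c Oc : ℝ}

private lemma pay_exit (q : ℝ) : bertPay al c Oc (-1) q = 0 := by
  simp [bertPay]

private lemma pay_win {p q : ℝ} (h0 : 0 ≤ p) (h1 : p ≤ al) (h : p < q ∨ q = -1) :
    bertPay al c Oc p q = (p - c) * (al - p) - Oc := by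
  have hp : p ≠ -1 := by intro h'; rw [h'] at h0; linarith
  have hpq : p ≠ q := by
    rcases h with h | h
    · exact ne_of_lt h
    · rw [h]; exact hp
  unfold bertPay demand
  rw [if_neg hp, if_neg hpq, if_pos h.symm, if_pos ⟨h0, h1⟩]

private lemma pay_tie {p : ℝ} (h0 : 0 ≤ p) (h1 : p ≤ al) :
    bertPay al c Oc p p = (p - c) * (al - p) / 2 - Oc := by
  have hp : p ≠ -1 := by intro h'; rw [h'] at h0; linarith
  unfold bertPay demand
  rw [if_neg hp, if_pos rfl, if_pos ⟨h0, h1⟩]; ring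

private lemma pay_lose {p q : ℝ} (h0 : 0 ≤ p) (hq : q ≠ -1) (hlt : q < p) :
    bertPay al c Oc p q = -Oc := by
  have hp : p ≠ -1 := by intro h'; rw [h'] at h0; linarith
  have hpq : p ≠ q := ne_of_gt hlt
  unfold bertPay
  rw [if_neg hp, if_neg hpq, if_neg]
  rintro (h | h)
  · exact hq h
  · linarith

private lemma pay_far {p q : ℝ} (hal0 : 0 < al) (h : al < p) :
    bertPay al c Oc p q = -Oc := by
  have hp : p ≠ -1 := by intro h'; rw [h'] at h; linarith
  have hd : demand al p = 0 := by
    unfold demand; rw [if_neg]; rintro ⟨_, h2⟩; linarith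
  unfold bertPay
  rw [if_neg hp]
  split_ifs with h1 h2
  · rw [hd]; ring
  · rw [hd]; ring
  · rfl

private lemma fmono {pm x y : ℝ} (hsum : al + c = 2 * pm) (hxy : x < y) (hy : y ≤ pm) :
    (x - c) * (al - x) < (y - c) * (al - y) := by
  nlinarith [mul_pos (sub_pos.2 hxy) (show (0:ℝ) < al + c - x - y by linarith)]

private lemma fmono' {pm x y : ℝ} (hsum : al + c = 2 * pm) (hxy : x ≤ y) (hy : y ≤ pm) :
    (x - c) * (al - x) ≤ (y - c) * (al - y) := by
  rcases eq_or_lt_of_le hxy with h | h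
  · rw [h]
  · exact (fmono hsum h hy).le

private lemma out_spec {pb pm x : ℝ}
    (hx : x ∈ (Ici (0:ℝ) ∪ {-1}) \ (Icc pb pm ∪ {-1})) :
    0 ≤ x ∧ (x < pb ∨ pm < x) := by
  obtain ⟨hA, hE⟩ := hx
  have h1 : x ≠ -1 := fun h => hE (Or.inr h)
  have h0 : 0 ≤ x := by
    rcases hA with h | h
    · exact h
    · exact absurd h h1
  refine ⟨h0, ?_⟩
  rcases lt_or_ge x pb with h | h
  · exact Or.inl h
  · rcases lt_or_ge pm x with h2 | h2
    · exact Or.inr h2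
    · exact absurd (Or.inl ⟨h, h2⟩) hE


private lemma beats_exit {pb pm : ℝ} (hOc : 0 < Oc) (h0c : 0 < c) (hcb : c < pb)
    (hbm : pb < pm) (hma : pm < al) (hfb : (pb - c) * (al - pb) = Oc)
    (hsum : al + c = 2 * pm) {q : ℝ} (hq : q ∈ Icc pb pm) :
    ∀ x ∈ (Ici (0:ℝ) ∪ {-1}) \ (Icc pb pm ∪ {-1}),
      bertPay al c Oc (-1) q > bertPay al c Oc x q := by
  intro x hx
  obtain ⟨hx0, hxs⟩ := out_spec hx
  have h0b : 0 < pb := h0c.trans hcb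
  rw [pay_exit]
  rcases hxs with h | h
  · rw [pay_win hx0 (by linarith : x ≤ al) (Or.inl (lt_of_lt_of_le h hq.1))]
    have := fmono hsum h hbm.le
    linarith
  · have hq1 : q ≠ -1 := by intro h'; rw [h'] at hq; linarith [hq.1]
    rw [pay_lose hx0 hq1 (lt_of_le_of_lt hq.2 h)]
    linarith

private lemma beats_pm {pb pm : ℝ} (hOc : 0 < Oc) (h0c : 0 < c) (hcb : c < pb)
    (hbm : pb < pm) (hma : pm < al) (hfb : (pb - c) * (al - pb) = Oc)
    (hsum : al + c = 2 * pm) :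
    ∀ x ∈ (Ici (0:ℝ) ∪ {-1}) \ (Icc pb pm ∪ {-1}),
      bertPay al c Oc pm (-1) > bertPay al c Oc x (-1) := by
  intro x hx
  obtain ⟨hx0, hxs⟩ := out_spec hx
  have h0b : 0 < pb := h0c.trans hcb
  rw [pay_win (by linarith : (0:ℝ) ≤ pm) hma.le (Or.inr rfl)]
  have hfpm : Oc < (pm - c) * (al - pm) := hfb ▸ fmono hsum hbm le_rfl
  rcases hxs with h | h
  · rw [pay_win hx0 (by linarith : x ≤ al) (Or.inr rfl)]
    have h1 : (x - c) * (al - x) < Oc := hfb ▸ fmono hsum h hbm.le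
    linarith
  · rcases le_or_gt x al with hxa | hxa
    · rw [pay_win hx0 hxa (Or.inr rfl)]
      have : (x - c) * (al - x) < (pm - c) * (al - pm) := by
        nlinarith [mul_pos (sub_pos.2 h) (sub_pos.2 h)]
      linarith
    · rw [pay_far (by linarith : (0:ℝ) < al) hxa]
      linarith

private lemma beats_under {pb pm : ℝ} (hOc : 0 < Oc) (h0c : 0 < c) (hcb : c < pb)
    (hbm : pb < pm) (hma : pm < al) (hfb : (pb - c) * (al - pb) = Oc)
    (hsum : al + c = 2 * pm) {b q : ℝ} (hb : b ∈ Icc pb pm) (hq : q ∈ Icc pb pm)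
    (hbq : b < q) (hOcb : Oc ≤ (b - c) * (al - b)) :
    ∀ x ∈ (Ici (0:ℝ) ∪ {-1}) \ (Icc pb pm ∪ {-1}),
      bertPay al c Oc b q > bertPay al c Oc x q := by
  intro x hx
  obtain ⟨hx0, hxs⟩ := out_spec hx
  have h0b : 0 < pb := h0c.trans hcb
  rw [pay_win (by linarith [hb.1] : (0:ℝ) ≤ b) (by linarith [hb.2] : b ≤ al) (Or.inl hbq)]
  rcases hxs with h | h
  · rw [pay_win hx0 (by linarith : x ≤ al) (Or.inl (lt_of_lt_of_le h hq.1))]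
    have h1 : (x - c) * (al - x) < Oc := hfb ▸ fmono hsum h hbm.le
    linarith
  · have hq1 : q ≠ -1 := by intro h'; rw [h'] at hq; linarith [hq.1]
    rw [pay_lose hx0 hq1 (lt_of_le_of_lt hq.2 h)]
    linarith

private lemma uupd (i : Fin 2) (a : Fin 2 → ℝ) (y : ℝ) :
    bertU al c Oc i (update a i y) = bertPay al c Oc y (a (opp i)) := by
  simp [bertU, Function.update_of_ne (opp_ne' i)]

private lemma uself (i : Fin 2) (a : Fin 2 → ℝ) :
    bertU al c Oc i a = bertPay al c Oc (a i) (a (opp i)) := rfl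

private lemma stabE {pb pm : ℝ} (hOc : 0 < Oc) (h0c : 0 < c) (hcb : c < pb)
    (hbm : pb < pm) (hma : pm < al) (hfb : (pb - c) * (al - pb) = Oc)
    (hsum : al + c = 2 * pm) :
    Stability (fun _ : Fin 2 => Ici (0:ℝ) ∪ {-1})
      (fun _ : Fin 2 => Icc pb pm ∪ {-1}) (bertU al c Oc) := by
  intro i a ha
  rcases ha (opp i) (opp_ne' i) with hq | hq
  · refine ⟨-1, Or.inr rfl, fun x hx => ?_⟩
    rw [uupd, uupd]
    exact beats_exit hOc h0c hcb hbm hma hfb hsum hq x hx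
  · refine ⟨pm, Or.inl ⟨hbm.le, le_rfl⟩, fun x hx => ?_⟩
    rw [uupd, uupd, (hq : a (opp i) = -1)]
    exact beats_pm hOc h0c hcb hbm hma hfb hsum x hx


private lemma o0 : opp 0 = 1 := by decide
private lemma o1 : opp 1 = 0 := by decide

private lemma unrestE {pb pm : ℝ} (hOc : 0 < Oc) (h0c : 0 < c) (hcb : c < pb)
    (hbm : pb < pm) (hma : pm < al) (hfb : (pb - c) * (al - pb) = Oc)
    (hsum : al + c = 2 * pm) :
    Unrest (fun _ : Fin 2 => Ici (0:ℝ) ∪ {-1})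
      (fun _ : Fin 2 => Icc pb pm ∪ {-1}) (bertU al c Oc) := by
  intro a ha
  have h0b : 0 < pb := h0c.trans hcb
  have hOpm : Oc < (pm - c) * (al - pm) := hfb ▸ fmono hsum hbm le_rfl
  rcases ha 0 with hx | hx <;> rcases ha 1 with hy | hy
  · -- both real
    rcases lt_trichotomy (a 0) (a 1) with hlt | heq | hgt
    · refine ⟨1, -1, Or.inr rfl, ?_, fun x hxx => ?_⟩
      · rw [uupd, uself, o1, pay_exit,
          pay_lose (by linarith [hy.1] : (0:ℝ) ≤ a 1)
            (by intro h'; rw [h'] at hx; linarith [hx.1]) hlt]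
        linarith
      · rw [uupd, uupd, o1]
        exact beats_exit hOc h0c hcb hbm hma hfb hsum hx x hxx
    · rcases lt_or_ge ((a 0 - c) * (al - a 0)) (2 * Oc) with hs | hs
      · refine ⟨0, -1, Or.inr rfl, ?_, fun x hxx => ?_⟩
        · rw [uupd, uself, o0, pay_exit, ← heq,
            pay_tie (by linarith [hx.1] : (0:ℝ) ≤ a 0) (by linarith [hx.2] : a 0 ≤ al)]
          linarith
        · rw [uupd, uupd, o0]
          exact beats_exit hOc h0c hcb hbm hma hfb hsum hy x hxx
      · have hpbp : pb < a 0 := by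
          by_contra hcon
          push_neg at hcon
          have := fmono' hsum hcon hbm.le
          linarith
        have hid : ((a 0 + pb)/2 - c) * (al - (a 0 + pb)/2)
            = ((a 0 - c) * (al - a 0) + (pb - c) * (al - pb))/2 + (a 0 - pb)^2/4 := by
          ring
        have hfbb : (a 0 - c) * (al - a 0) / 2 + Oc / 2 ≤ ((a 0 + pb)/2 - c) * (al - (a 0 + pb)/2) := by
          rw [hid, hfb]
          nlinarith [sq_nonneg (a 0 - pb)]
        have hbI : (a 0 + pb)/2 ∈ Icc pb pm := ⟨by linarith, by linarith [hx.2]⟩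
        refine ⟨0, (a 0 + pb)/2, Or.inl hbI, ?_, fun x hxx => ?_⟩
        · rw [uupd, uself, o0, ← heq,
            pay_win (by linarith : (0:ℝ) ≤ (a 0 + pb)/2) (by linarith [hx.2] : (a 0 + pb)/2 ≤ al)
              (Or.inl (by linarith)),
            pay_tie (by linarith [hx.1] : (0:ℝ) ≤ a 0) (by linarith [hx.2] : a 0 ≤ al)]
          linarith
        · rw [uupd, uupd, o0]
          exact beats_under hOc h0c hcb hbm hma hfb hsum hbI hy (by rw [← heq]; linarith)
            (by linarith) x hxx
    · refine ⟨0, -1, Or.inr rfl, ?_, fun x hxx => ?_⟩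
      · rw [uupd, uself, o0, pay_exit,
          pay_lose (by linarith [hx.1] : (0:ℝ) ≤ a 0)
            (by intro h'; rw [h'] at hy; linarith [hy.1]) hgt]
        linarith
      · rw [uupd, uupd, o0]
        exact beats_exit hOc h0c hcb hbm hma hfb hsum hy x hxx
  · -- a 0 real, a 1 = -1
    rcases eq_or_lt_of_le hx.2 with he | hl
    · -- a 0 = pm : player 1 undercuts
      have hbI : (pb + pm)/2 ∈ Icc pb pm := ⟨by linarith, by linarith⟩
      have hfbb : Oc < ((pb + pm)/2 - c) * (al - (pb + pm)/2) :=
        hfb ▸ fmono hsum (by linarith) (by linarith)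
      refine ⟨1, (pb + pm)/2, Or.inl hbI, ?_, fun x hxx => ?_⟩
      · rw [uupd, uself, o1, (hy : a 1 = -1), he,
          pay_win (by linarith : (0:ℝ) ≤ (pb + pm)/2) (by linarith : (pb + pm)/2 ≤ al)
            (Or.inl (by linarith)),
          pay_exit]
        linarith
      · rw [uupd, uupd, o1, he]
        exact beats_under hOc h0c hcb hbm hma hfb hsum hbI ⟨hbm.le, le_rfl⟩
          (by linarith) hfbb.le x hxx
    · refine ⟨0, pm, Or.inl ⟨hbm.le, le_rfl⟩, ?_, fun x hxx => ?_⟩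
      · rw [uupd, uself, o0, (hy : a 1 = -1),
          pay_win (by linarith : (0:ℝ) ≤ pm) hma.le (Or.inr rfl),
          pay_win (by linarith [hx.1] : (0:ℝ) ≤ a 0) (by linarith [hx.2] : a 0 ≤ al) (Or.inr rfl)]
        have := fmono hsum hl (le_refl pm)
        linarith
      · rw [uupd, uupd, o0, (hy : a 1 = -1)]
        exact beats_pm hOc h0c hcb hbm hma hfb hsum x hxx
  · -- a 0 = -1, a 1 real
    rcases eq_or_lt_of_le hy.2 with he | hl
    · have hbI : (pb + pm)/2 ∈ Icc pb pm := ⟨by linarith, by linarith⟩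
      have hfbb : Oc < ((pb + pm)/2 - c) * (al - (pb + pm)/2) :=
        hfb ▸ fmono hsum (by linarith) (by linarith)
      refine ⟨0, (pb + pm)/2, Or.inl hbI, ?_, fun x hxx => ?_⟩
      · rw [uupd, uself, o0, (hx : a 0 = -1), he,
          pay_win (by linarith : (0:ℝ) ≤ (pb + pm)/2) (by linarith : (pb + pm)/2 ≤ al)
            (Or.inl (by linarith)),
          pay_exit]
        linarith
      · rw [uupd, uupd, o0, he]
        exact beats_under hOc h0c hcb hbm hma hfb hsum hbI ⟨hbm.le, le_rfl⟩
          (by linarith) hfbb.le x hxx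
    · refine ⟨1, pm, Or.inl ⟨hbm.le, le_rfl⟩, ?_, fun x hxx => ?_⟩
      · rw [uupd, uself, o1, (hx : a 0 = -1),
          pay_win (by linarith : (0:ℝ) ≤ pm) hma.le (Or.inr rfl),
          pay_win (by linarith [hy.1] : (0:ℝ) ≤ a 1) (by linarith [hy.2] : a 1 ≤ al) (Or.inr rfl)]
        have := fmono hsum hl (le_refl pm)
        linarith
      · rw [uupd, uupd, o1, (hx : a 0 = -1)]
        exact beats_pm hOc h0c hcb hbm hma hfb hsum x hxx
  · -- both -1
    refine ⟨0, pm, Or.inl ⟨hbm.le, le_rfl⟩, ?_, fun x hxx => ?_⟩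
    · rw [uupd, uself, o0, (hx : a 0 = -1), (hy : a 1 = -1),
        pay_win (by linarith : (0:ℝ) ≤ pm) hma.le (Or.inr rfl), pay_exit]
      linarith
    · rw [uupd, uupd, o0, (hy : a 1 = -1)]
      exact beats_pm hOc h0c hcb hbm hma hfb hsum x hxx


private lemma stab_pair {F : Fin 2 → Set ℝ}
    (hS : Stability (fun _ : Fin 2 => Ici (0:ℝ) ∪ {-1}) F (bertU al c Oc))
    (i : Fin 2) {q : ℝ} (hq : q ∈ F (opp i)) :
    ∃ b ∈ F i, ∀ x ∈ (Ici (0:ℝ) ∪ {-1}) \ F i,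
      bertPay al c Oc b q > bertPay al c Oc x q := by
  obtain ⟨b, hbF, hb⟩ := hS i (fun _ => q) (fun j hj => by
    rw [eq_opp_of_ne hj]; exact hq)
  refine ⟨b, hbF, fun x hx => ?_⟩
  have := hb x hx
  simpa [bertU, Function.update_of_ne (opp_ne' i)] using this

private lemma unrest_pair {F : Fin 2 → Set ℝ}
    (hU : Unrest (fun _ : Fin 2 => Ici (0:ℝ) ∪ {-1}) F (bertU al c Oc))
    (i : Fin 2) {p q : ℝ} (hp : p ∈ F i) (hq : q ∈ F (opp i)) :
    (∃ b ∈ F i, bertPay al c Oc b q > bertPay al c Oc p q ∧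
       ∀ x ∈ (Ici (0:ℝ) ∪ {-1}) \ F i, bertPay al c Oc b q > bertPay al c Oc x q) ∨
    (∃ b ∈ F (opp i), bertPay al c Oc b p > bertPay al c Oc q p ∧
       ∀ x ∈ (Ici (0:ℝ) ∪ {-1}) \ F (opp i),
         bertPay al c Oc b p > bertPay al c Oc x p) := by
  have ha : ∀ j, (fun j => if j = i then p else q) j ∈ F j := by
    intro j
    rcases fin2_eq_or i j with h | h
    · subst h; simpa using hp
    · subst h
      simp only [if_neg (opp_ne' i)]
      exact hq
  obtain ⟨k, b, hbF, h1, h2⟩ := hU _ ha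
  rcases fin2_eq_or i k with hk | hk
  · subst hk
    left
    refine ⟨b, hbF, ?_, fun x hx => ?_⟩
    · simpa [bertU, Function.update_of_ne (opp_ne' k), opp_ne' k] using h1
    · have := h2 x hx
      simpa [bertU, Function.update_of_ne (opp_ne' k), opp_ne' k] using this
  · subst hk
    right
    refine ⟨b, hbF, ?_, fun x hx => ?_⟩
    · simpa [bertU, Function.update_of_ne (opp_ne' i).symm, opp_opp', opp_ne' i] using h1
    · have := h2 x hx
      simpa [bertU, Function.update_of_ne (opp_ne' i).symm, opp_opp', opp_ne' i] using this


private lemma step2 {pb pm : ℝ} (hOc : 0 < Oc) (h0c : 0 < c) (hcb : c < pb)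
    (hbm : pb < pm) (hma : pm < al) (hfb : (pb - c) * (al - pb) = Oc)
    (hsum : al + c = 2 * pm) {F : Fin 2 → Set ℝ}
    (hS : Stability (fun _ : Fin 2 => Ici (0:ℝ) ∪ {-1}) F (bertU al c Oc))
    (hFE : ∀ k, F k ⊆ Icc pb pm ∪ {-1}) (hFcl : ∀ k, IsClosed (F k))
    (i : Fin 2) {q : ℝ} (hqF : q ∈ F (opp i)) (hqI : q ∈ Icc pb pm) (hpbq : pb < q) :
    ∃ u, pb ≤ u ∧ u < q ∧ Ioc u q ⊆ F i := by
  have h0b : 0 < pb := h0c.trans hcb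
  have hOq : Oc < (q - c) * (al - q) := hfb ▸ fmono hsum hpbq hqI.2
  obtain ⟨b, hbF, hb⟩ := stab_pair hS i hqF
  have hq1 : q ≠ -1 := by intro h'; rw [h'] at hqI; linarith [hqI.1]
  have hbt : bertPay al c Oc b q < (q - c) * (al - q) - Oc := by
    rcases hFE i hbF with hbI | hb1
    · rcases lt_trichotomy b q with h | h | h
      · rw [pay_win (by linarith [hbI.1] : (0:ℝ) ≤ b) (by linarith [hbI.2] : b ≤ al)
          (Or.inl h)]
        have := fmono hsum h hqI.2
        linarith
      · rw [h, pay_tie (by linarith [hqI.1] : (0:ℝ) ≤ q) (by linarith [hqI.2] : q ≤ al)]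
        linarith
      · rw [pay_lose (by linarith [hbI.1] : (0:ℝ) ≤ b) hq1 h]
        linarith
    · rw [hb1, pay_exit]
      linarith
  have hcont : ContinuousOn (fun x : ℝ => (x - c) * (al - x)) (Icc pb q) := by fun_prop
  have hiv := intermediate_value_Icc (le_of_lt hpbq) hcont
  have hmem : max Oc (bertPay al c Oc b q + Oc)
      ∈ Icc ((pb - c) * (al - pb)) ((q - c) * (al - q)) := by
    constructor
    · rw [hfb]; exact le_max_left _ _
    · exact le_of_lt (max_lt hOq (by linarith))
  obtain ⟨u, huI, hfu0⟩ := hiv hmem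
  have hfu : (u - c) * (al - u) = max Oc (bertPay al c Oc b q + Oc) := hfu0
  have hult : u < q := by
    rcases lt_or_eq_of_le huI.2 with h | h
    · exact h
    · exfalso
      rw [h] at hfu
      have hlt := max_lt hOq (show bertPay al c Oc b q + Oc < (q - c) * (al - q) by linarith)
      rw [← hfu] at hlt
      exact lt_irrefl _ hlt
  have hIoo : Ioo u q ⊆ F i := by
    intro x hx
    by_contra hxF
    have hx0 : (0:ℝ) ≤ x := by linarith [huI.1, hx.1]
    have hbx := hb x ⟨Or.inl hx0, hxF⟩
    rw [pay_win hx0 (by linarith [hqI.2, hx.2] : x ≤ al) (Or.inl hx.2)] at hbx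
    have h1 : max Oc (bertPay al c Oc b q + Oc) < (x - c) * (al - x) := by
      rw [← hfu]
      exact fmono hsum hx.1 (by linarith [hqI.2, hx.2] : x ≤ pm)
    have h2 : bertPay al c Oc b q + Oc ≤ max Oc (bertPay al c Oc b q + Oc) := le_max_right _ _
    linarith
  have hqmem : q ∈ F i := by
    have hcl : closure (Ioo u q) ⊆ F i := (hFcl i).closure_subset_iff.mpr hIoo
    rw [closure_Ioo (ne_of_lt hult)] at hcl
    exact hcl ⟨hult.le, le_rfl⟩
  exact ⟨u, huI.1, hult, fun x hx => (eq_or_lt_of_le hx.2).elim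
    (fun h => h ▸ hqmem) (fun h => hIoo ⟨hx.1, h⟩)⟩


private lemma minE {pb pm : ℝ} (hOc : 0 < Oc) (h0c : 0 < c) (hcb : c < pb)
    (hbm : pb < pm) (hma : pm < al) (hfb : (pb - c) * (al - pb) = Oc)
    (hsum : al + c = 2 * pm) (F : Fin 2 → Set ℝ)
    (hFne : ∀ i, (F i).Nonempty) (hFcl : ∀ i, IsClosed (F i))
    (hss : Set.pi Set.univ F ⊂ Set.pi Set.univ (fun _ : Fin 2 => Icc pb pm ∪ {-1})) :
    ¬(Stability (fun _ : Fin 2 => Ici (0:ℝ) ∪ {-1}) F (bertU al c Oc) ∧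
      Unrest (fun _ : Fin 2 => Ici (0:ℝ) ∪ {-1}) F (bertU al c Oc)) := by
  rintro ⟨hS, hU⟩
  have h0b : 0 < pb := h0c.trans hcb
  have hFE : ∀ i, F i ⊆ Icc pb pm ∪ {-1} := by
    intro i x hx
    have hg : (Function.update (fun j => (hFne j).some) i x) ∈ Set.pi Set.univ F := by
      intro j _
      rcases eq_or_ne j i with h | h
      · subst h; simpa using hx
      · rw [Function.update_of_ne h]; exact (hFne j).some_mem
    have h2 := hss.1 hg i (mem_univ i)
    simpa using h2
  have hRcomp : ∀ k, IsCompact (F k ∩ Icc pb pm) := fun k =>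
    IsCompact.of_isClosed_subset isCompact_Icc ((hFcl k).inter isClosed_Icc)
      inter_subset_right
  -- Step 1 : each F k contains a real price
  have hsing : ∀ k, ¬(F k ∩ Icc pb pm).Nonempty → F k = {-1} := by
    intro k hk
    refine Set.eq_singleton_iff_nonempty_unique_mem.mpr ⟨hFne k, fun x hx => ?_⟩
    rcases hFE k hx with h | h
    · exact absurd ⟨x, hx, h⟩ hk
    · exact h
  have hRne : ∀ k, (F k ∩ Icc pb pm).Nonempty := by
    by_contra hcon
    push_neg at hcon
    obtain ⟨k, hk⟩ := hcon
    have hk' : ¬(F k ∩ Icc pb pm).Nonempty := by rw [hk]; exact Set.not_nonempty_empty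
    have hFk : F k = {-1} := hsing k hk'
    have hk1 : (-1:ℝ) ∈ F k := by rw [hFk]; rfl
    by_cases hko : (F (opp k) ∩ Icc pb pm).Nonempty
    · have hM := (hRcomp (opp k)).sSup_mem hko
      rcases unrest_pair hU k hk1 hM.1 with ⟨b, hbF, himp, -⟩ | ⟨b, hbF, himp, -⟩
      · rw [hFk, mem_singleton_iff] at hbF
        rw [hbF] at himp
        exact lt_irrefl _ himp
      · rw [pay_win (by linarith [hM.2.1] : (0:ℝ) ≤ sSup (F (opp k) ∩ Icc pb pm))
          (by linarith [hM.2.2] : sSup (F (opp k) ∩ Icc pb pm) ≤ al) (Or.inr rfl)] at himp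
        have hfM : Oc ≤ (sSup (F (opp k) ∩ Icc pb pm) - c) * (al - sSup (F (opp k) ∩ Icc pb pm)) :=
          hfb ▸ fmono' hsum hM.2.1 hM.2.2
        rcases hFE (opp k) hbF with hbI | hb1
        · have hble : b ≤ sSup (F (opp k) ∩ Icc pb pm) :=
            le_csSup (hRcomp (opp k)).bddAbove ⟨hbF, hbI⟩
          rw [pay_win (by linarith [hbI.1] : (0:ℝ) ≤ b) (by linarith [hbI.2] : b ≤ al)
            (Or.inr rfl)] at himp
          have := fmono' hsum hble hM.2.2
          linarith
        · rw [hb1, pay_exit] at himp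
          linarith
    · have hFko : F (opp k) = {-1} := hsing _ hko
      have hk2 : (-1:ℝ) ∈ F (opp k) := by rw [hFko]; rfl
      rcases unrest_pair hU k hk1 hk2 with ⟨b, hbF, himp, -⟩ | ⟨b, hbF, himp, -⟩
      · rw [hFk, mem_singleton_iff] at hbF
        rw [hbF] at himp
        exact lt_irrefl _ himp
      · rw [hFko, mem_singleton_iff] at hbF
        rw [hbF] at himp
        exact lt_irrefl _ himp
  -- Step 3 : pb belongs to some F j
  have hpbF : ∃ j, pb ∈ F j := by
    have hcomp : IsCompact ((F 0 ∩ Icc pb pm) ∪ (F 1 ∩ Icc pb pm)) :=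
      (hRcomp 0).union (hRcomp 1)
    have hune : ((F 0 ∩ Icc pb pm) ∪ (F 1 ∩ Icc pb pm)).Nonempty :=
      (hRne 0).mono subset_union_left
    have hm := hcomp.sInf_mem hune
    obtain ⟨j, hmj⟩ : ∃ j, sInf ((F 0 ∩ Icc pb pm) ∪ (F 1 ∩ Icc pb pm)) ∈ F j ∩ Icc pb pm := by
      rcases hm with h | h
      · exact ⟨0, h⟩
      · exact ⟨1, h⟩
    rcases eq_or_lt_of_le hmj.2.1 with heq | hlt
    · exact ⟨j, heq ▸ hmj.1⟩
    · exfalso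
      obtain ⟨u, hu1, hu2, hu3⟩ := step2 hOc h0c hcb hbm hma hfb hsum hS hFE hFcl (opp j)
        (by rw [opp_opp']; exact hmj.1) hmj.2 hlt
      have hx : (u + sInf ((F 0 ∩ Icc pb pm) ∪ (F 1 ∩ Icc pb pm)))/2 ∈ F (opp j) ∩ Icc pb pm :=
        ⟨hu3 ⟨by linarith, by linarith⟩, ⟨by linarith, by linarith [hmj.2.2]⟩⟩
      have hxu : (u + sInf ((F 0 ∩ Icc pb pm) ∪ (F 1 ∩ Icc pb pm)))/2
          ∈ (F 0 ∩ Icc pb pm) ∪ (F 1 ∩ Icc pb pm) := by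
        rcases fin2_eq_or 0 (opp j) with h | h
        · rw [h] at hx; exact Or.inl hx
        · rw [o0] at h; rw [h] at hx; exact Or.inr hx
      have := csInf_le hcomp.bddBelow hxu
      linarith
  -- Step 4 : pb ∈ F j → -1 ∈ F (opp j)
  have step4 : ∀ j, pb ∈ F j → (-1:ℝ) ∈ F (opp j) := by
    intro j hpb
    obtain ⟨b, hbF, hb⟩ := stab_pair hS (opp j) (q := pb) (by rw [opp_opp']; exact hpb)
    by_contra h1
    have hbpb := hb (-1) ⟨Or.inr rfl, h1⟩
    rw [pay_exit] at hbpb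
    rcases hFE (opp j) hbF with hbI | hb1
    · rcases eq_or_lt_of_le hbI.1 with heq | hlt
      · rw [← heq, pay_tie (by linarith : (0:ℝ) ≤ pb) (by linarith : pb ≤ al), hfb] at hbpb
        linarith
      · rw [pay_lose (by linarith [hbI.1] : (0:ℝ) ≤ b)
          (by intro h'; rw [h'] at h0b; linarith) hlt] at hbpb
        linarith
    · exact h1 (hb1 ▸ hbF)
  -- Step 5 : -1 ∈ F i → pm ∈ F (opp i)
  have step5 : ∀ i, (-1:ℝ) ∈ F i → pm ∈ F (opp i) := by
    intro i h1
    obtain ⟨b, hbF, hb⟩ := stab_pair hS (opp i) (q := (-1:ℝ)) (by rw [opp_opp']; exact h1)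
    by_contra hpmF
    have hbpm := hb pm ⟨Or.inl (by linarith : (0:ℝ) ≤ pm), hpmF⟩
    rw [pay_win (by linarith : (0:ℝ) ≤ pm) hma.le (Or.inr rfl)] at hbpm
    have hOpm : Oc < (pm - c) * (al - pm) := hfb ▸ fmono hsum hbm le_rfl
    rcases hFE (opp i) hbF with hbI | hb1
    · have hblt : b < pm := lt_of_le_of_ne hbI.2 (fun h => hpmF (h ▸ hbF))
      rw [pay_win (by linarith [hbI.1] : (0:ℝ) ≤ b) (by linarith [hbI.2] : b ≤ al)
        (Or.inr rfl)] at hbpm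
      have := fmono hsum hblt le_rfl
      linarith
    · rw [hb1, pay_exit] at hbpm
      linarith
  -- chain: pm ∈ both components
  obtain ⟨j0, hpbj0⟩ := hpbF
  have hno : (-1:ℝ) ∈ F (opp j0) := step4 j0 hpbj0
  have hpm1 : pm ∈ F j0 := by
    have := step5 (opp j0) hno
    rwa [opp_opp'] at this
  have hpmI : pm ∈ Icc pb pm := ⟨hbm.le, le_rfl⟩
  have hpm2 : pm ∈ F (opp j0) := by
    obtain ⟨u, -, hu2, hu3⟩ := step2 hOc h0c hcb hbm hma hfb hsum hS hFE hFcl (opp j0)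
      (by rw [opp_opp']; exact hpm1) hpmI hbm
    exact hu3 ⟨hu2, le_rfl⟩
  have hpmA : ∀ k, pm ∈ F k := by
    intro k
    rcases fin2_eq_or j0 k with h | h
    · rw [h]; exact hpm1
    · rw [h]; exact hpm2
  -- Step 6 : no gaps
  have hIook : ∀ k, Ioo pb pm ⊆ F k := by
    have key : ∀ x ∈ Ioo pb pm, x ∈ F 0 ∩ F 1 := by
      by_contra hT
      push_neg at hT
      obtain ⟨x0, hx01, hx02⟩ := hT
      have hTne : (Ioo pb pm \ (F 0 ∩ F 1)).Nonempty := ⟨x0, hx01, hx02⟩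
      have hTopen : IsOpen (Ioo pb pm \ (F 0 ∩ F 1)) :=
        isOpen_Ioo.sdiff ((hFcl 0).inter (hFcl 1))
      have hTbdd : BddAbove (Ioo pb pm \ (F 0 ∩ F 1)) := ⟨pm, fun x hx => hx.1.2.le⟩
      have hwT : sSup (Ioo pb pm \ (F 0 ∩ F 1)) ∉ (Ioo pb pm \ (F 0 ∩ F 1)) := by
        intro hw
        obtain ⟨ε, hε, hball⟩ := Metric.isOpen_iff.1 hTopen _ hw
        have hmem : sSup (Ioo pb pm \ (F 0 ∩ F 1)) + ε/2 ∈ (Ioo pb pm \ (F 0 ∩ F 1)) := by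
          apply hball
          have h' : sSup (Ioo pb pm \ (F 0 ∩ F 1)) + ε/2 - sSup (Ioo pb pm \ (F 0 ∩ F 1))
              = ε/2 := by ring
          rw [Metric.mem_ball, Real.dist_eq, h', abs_of_pos (by linarith : (0:ℝ) < ε/2)]
          linarith
        have := le_csSup hTbdd hmem
        linarith
      obtain ⟨t0, ht0⟩ := id hTne
      have hwlb : pb < sSup (Ioo pb pm \ (F 0 ∩ F 1)) :=
        lt_of_lt_of_le ht0.1.1 (le_csSup hTbdd ht0)
      have hwub : sSup (Ioo pb pm \ (F 0 ∩ F 1)) < pm := by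
        obtain ⟨u0, hu01, hu02, hu03⟩ := step2 hOc h0c hcb hbm hma hfb hsum hS hFE hFcl 0
          (hpmA (opp 0)) hpmI hbm
        obtain ⟨u1, hu11, hu12, hu13⟩ := step2 hOc h0c hcb hbm hma hfb hsum hS hFE hFcl 1
          (hpmA (opp 1)) hpmI hbm
        have hub : ∀ x ∈ (Ioo pb pm \ (F 0 ∩ F 1)), x ≤ max u0 u1 := by
          intro x hx
          by_contra hxu
          push_neg at hxu
          exact hx.2 ⟨hu03 ⟨lt_of_le_of_lt (le_max_left _ _) hxu, hx.1.2.le⟩,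
            hu13 ⟨lt_of_le_of_lt (le_max_right _ _) hxu, hx.1.2.le⟩⟩
        exact lt_of_le_of_lt (csSup_le hTne hub) (max_lt hu02 hu12)
      have hwF : sSup (Ioo pb pm \ (F 0 ∩ F 1)) ∈ F 0 ∩ F 1 := by
        by_contra h
        exact hwT ⟨⟨hwlb, hwub⟩, h⟩
      obtain ⟨v0, hv01, hv02, hv03⟩ := step2 hOc h0c hcb hbm hma hfb hsum hS hFE hFcl 0
        (show sSup (Ioo pb pm \ (F 0 ∩ F 1)) ∈ F (opp 0) by rw [o0]; exact hwF.2)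
        ⟨hwlb.le, hwub.le⟩ hwlb
      obtain ⟨v1, hv11, hv12, hv13⟩ := step2 hOc h0c hcb hbm hma hfb hsum hS hFE hFcl 1
        (show sSup (Ioo pb pm \ (F 0 ∩ F 1)) ∈ F (opp 1) by rw [o1]; exact hwF.1)
        ⟨hwlb.le, hwub.le⟩ hwlb
      obtain ⟨t, htT, htv⟩ := exists_lt_of_lt_csSup hTne
        (show max v0 v1 < sSup (Ioo pb pm \ (F 0 ∩ F 1)) from max_lt hv02 hv12)
      have htw : t ≤ sSup (Ioo pb pm \ (F 0 ∩ F 1)) := le_csSup hTbdd htT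
      have htww : t < sSup (Ioo pb pm \ (F 0 ∩ F 1)) :=
        lt_of_le_of_ne htw (fun h => hwT (h ▸ htT))
      exact htT.2 ⟨hv03 ⟨lt_of_le_of_lt (le_max_left _ _) htv, htww.le⟩,
        hv13 ⟨lt_of_le_of_lt (le_max_right _ _) htv, htww.le⟩⟩
    intro k x hx
    rcases fin2_eq_or 0 k with h | h
    · rw [h]
      exact (key x hx).1
    · rw [h, o0]
      exact (key x hx).2
  have hIcc : ∀ k, Icc pb pm ⊆ F k := by
    intro k
    have h1 : closure (Ioo pb pm) ⊆ F k := (hFcl k).closure_subset_iff.mpr (hIook k)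
    rwa [closure_Ioo hbm.ne] at h1
  have hEF : ∀ k, Icc pb pm ∪ {-1} ⊆ F k := by
    intro k x hx
    rcases hx with hx | hx
    · exact hIcc k hx
    · have hpbk : pb ∈ F (opp k) := hIcc (opp k) ⟨le_rfl, hbm.le⟩
      have h2 := step4 (opp k) hpbk
      rw [opp_opp'] at h2
      rw [mem_singleton_iff] at hx
      rw [hx]
      exact h2
  have hFeq : F = (fun _ : Fin 2 => Icc pb pm ∪ {-1}) :=
    funext fun k => Subset.antisymm (hFE k) (hEF k)
  exact hss.2 (by rw [hFeq])

end BertrandAux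

/-- In the Bertrand duopoly with operational cost, if
`α > c + 2√O_c` then `([p_b, p_m*] ∪ {n_o})²` is an equilibrium cycle, where
`p_m* = (α + c)/2` and `p_b = p_m* - √((α - c)²/4 - O_c)`. -/
theorem bertrand_ec (al c Oc : ℝ) (hc : 0 < c) (hOc : 0 < Oc)
    (hal : c + 2 * Real.sqrt Oc < al) :
    IsEquilibriumCycle
      (fun _ : Fin 2 => Set.Ici (0 : ℝ) ∪ {-1})
      (fun _ : Fin 2 =>
        Set.Icc ((al + c) / 2 - Real.sqrt ((al - c) ^ 2 / 4 - Oc)) ((al + c) / 2)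
          ∪ {-1})
      (bertU al c Oc) := by
  have hs0 : 0 < Real.sqrt Oc := Real.sqrt_pos.2 hOc
  have hac : 0 < al - c := by linarith
  have hOlt : Oc < (al - c) ^ 2 / 4 := by
    nlinarith [Real.sq_sqrt hOc.le,
      mul_pos hs0 (show (0:ℝ) < al - c - 2 * Real.sqrt Oc by linarith),
      sq_nonneg (al - c - 2 * Real.sqrt Oc)]
  have hs2 : Real.sqrt ((al - c) ^ 2 / 4 - Oc) ^ 2 = (al - c) ^ 2 / 4 - Oc :=
    Real.sq_sqrt (by linarith)
  have hspos : 0 < Real.sqrt ((al - c) ^ 2 / 4 - Oc) := Real.sqrt_pos.2 (by linarith)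
  have hslt : Real.sqrt ((al - c) ^ 2 / 4 - Oc) < (al - c) / 2 := by
    have h1 : Real.sqrt ((al - c) ^ 2 / 4 - Oc) < Real.sqrt (((al - c) / 2) ^ 2) := by
      apply Real.sqrt_lt_sqrt (by linarith)
      have hd2 : ((al - c) / 2) ^ 2 = (al - c) ^ 2 / 4 := by ring
      rw [hd2]; linarith
    rwa [Real.sqrt_sq (by linarith : (0:ℝ) ≤ (al - c) / 2)] at h1
  set s := Real.sqrt ((al - c) ^ 2 / 4 - Oc) with hsdef
  set pm := (al + c) / 2 with hpmdef
  set pb := pm - s with hpbdef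
  have hcb : c < pb := by rw [hpbdef, hpmdef]; linarith
  have hbm : pb < pm := by rw [hpbdef]; linarith
  have hma : pm < al := by rw [hpmdef]; linarith
  have hsum : al + c = 2 * pm := by rw [hpmdef]; ring
  have hfb : (pb - c) * (al - pb) = Oc := by
    rw [hpbdef, hpmdef]
    nlinarith [hs2]
  have h0b : 0 < pb := hc.trans hcb
  refine ⟨fun i => ⟨-1, Or.inr rfl⟩, ?_,
    fun i => isClosed_Icc.union isClosed_singleton,
    stabE hOc hc hcb hbm hma hfb hsum, unrestE hOc hc hcb hbm hma hfb hsum,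
    fun F h1 h2 h3 => minE hOc hc hcb hbm hma hfb hsum F h1 h2 h3⟩
  rintro i x (hx | hx)
  · exact Or.inl (le_trans h0b.le hx.1)
  · exact Or.inr hx
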